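/- arXiv:1501.06103 — 2 statements merged into one kernel-verified Lean document; each statement's English description precedes it below -/
import Mathlib

section
/- If for every f ∈ ℱ and every Borel set B ⊆ 𝒴 one has ∫_{𝒳×𝒴} ⟨φ(x), f⟩ 𝟙_B(y) dθ(x,y) = 0, and the mean embedding of finite signed measures on 𝒳 into ℱ is injective, then θ(A × B) = 0 for all Borel sets A ⊆ 𝒳, B ⊆ 𝒴. -/
/-! For measurable `B`, the slice `A ↦ θ (A ×ˢ B)` is the signed measure
`(θ.restrict (Prod.snd ⁻¹' B)).map Prod.fst`, whose Jordan parts are the first marginals of the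
Jordan parts of `θ` restricted to `𝒳 × B`. Pairing its mean embedding with `f` gives exactly the
integral in the hypothesis, so the embedding is orthogonal to everything, hence zero, and
injectivity kills the slice. -/

open MeasureTheory
open scoped InnerProductSpace ENNReal

/-- Bochner integral of `f` against a finite signed measure `s`, defined via the
Jordan decomposition `s = s⁺ - s⁻`. -/
noncomputable def sInt {X E : Type*} [MeasurableSpace X] [NormedAddCommGroup E]
    [NormedSpace ℝ E] [CompleteSpace E] (s : SignedMeasure X) (f : X → E) : E :=
  (∫ x, f x ∂s.toJordanDecomposition.posPart) - ∫ x, f x ∂s.toJordanDecomposition.negPart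

/-- The rank-one operator `a ⊗ b : f ↦ ⟪b, f⟫ • a`. -/
noncomputable def rank1 {F G : Type*} [NormedAddCommGroup F] [InnerProductSpace ℝ F]
    [NormedAddCommGroup G] [InnerProductSpace ℝ G] (a : G) (b : F) : F →L[ℝ] G :=
  (innerSL ℝ b).smulRight a

section SignedIntegral

variable {X E : Type*} [MeasurableSpace X] [NormedAddCommGroup E] [NormedSpace ℝ E]
  [CompleteSpace E]

lemma MeasureTheory.Measure.toJordanDecomposition_toSignedMeasure (ρ : Measure X)
    [IsFiniteMeasure ρ] :
    ρ.toSignedMeasure.toJordanDecomposition = ⟨ρ, 0, .zero_right⟩ :=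
  SignedMeasure.toJordanDecomposition_eq <| by simp [JordanDecomposition.toSignedMeasure]

lemma sInt_zero (f : X → E) : sInt 0 f = 0 := by
  simp [sInt, SignedMeasure.toJordanDecomposition_zero]

lemma sInt_toSignedMeasure (ρ : Measure X) [IsFiniteMeasure ρ] (f : X → E) :
    sInt ρ.toSignedMeasure f = ∫ x, f x ∂ρ := by
  simp [sInt, Measure.toJordanDecomposition_toSignedMeasure]

/-- A non-integrable `f` would send `ρ` to the junk value `0`, just like the zero measure. -/
lemma integrable_of_injective_sInt {f : X → E}
    (hf : Function.Injective (fun μ : SignedMeasure X => sInt μ f))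
    (ρ : Measure X) [IsFiniteMeasure ρ] : Integrable f ρ := by
  by_contra hρ
  have hρ_zero : ρ.toSignedMeasure = (0 : Measure X).toSignedMeasure :=
    hf <| by simp only [sInt_toSignedMeasure, integral_undef hρ, integral_zero_measure]
  exact hρ (Measure.toSignedMeasure_eq_toSignedMeasure_iff.mp hρ_zero ▸ integrable_zero_measure)

lemma sInt_sub_toSignedMeasure {f : X → E}
    (hf : ∀ (ρ : Measure X) [IsFiniteMeasure ρ], Integrable f ρ)
    (μ ν : Measure X) [IsFiniteMeasure μ] [IsFiniteMeasure ν] :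
    sInt (μ.toSignedMeasure - ν.toSignedMeasure) f = ∫ x, f x ∂μ - ∫ x, f x ∂ν := by
  set j := (μ.toSignedMeasure - ν.toSignedMeasure).toJordanDecomposition
  have hj : j.posPart.toSignedMeasure - j.negPart.toSignedMeasure =
      μ.toSignedMeasure - ν.toSignedMeasure :=
    SignedMeasure.toSignedMeasure_toJordanDecomposition _
  have hsum : μ + j.negPart = j.posPart + ν := by
    rw [← Measure.toSignedMeasure_eq_toSignedMeasure_iff, Measure.toSignedMeasure_add,
      Measure.toSignedMeasure_add]
    exact (sub_eq_sub_iff_add_eq_add.mp hj).symm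
  have := congrArg (fun m => ∫ x, f x ∂m) hsum
  simp only [integral_add_measure (hf _) (hf _)] at this
  rw [sInt, sub_eq_sub_iff_add_eq_add]
  exact this.symm

end SignedIntegral

section Marginal

variable {X Y : Type*} [MeasurableSpace X] [MeasurableSpace Y] {B : Set Y}

lemma MeasureTheory.Measure.fst_restrict_snd_preimage_apply (ρ : Measure (X × Y))
    {A : Set X} (hA : MeasurableSet A) :
    (ρ.restrict (Prod.snd ⁻¹' B)).fst A = ρ (A ×ˢ B) := by
  rw [Measure.fst_apply hA, Measure.restrict_apply (measurable_fst hA), ← Set.prod_eq]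

lemma MeasureTheory.Measure.integral_fst_restrict_snd_preimage (ρ : Measure (X × Y))
    (hB : MeasurableSet B) {g : X → ℝ}
    (hg : AEStronglyMeasurable g (ρ.restrict (Prod.snd ⁻¹' B)).fst) :
    ∫ x, g x ∂(ρ.restrict (Prod.snd ⁻¹' B)).fst = ∫ p, g p.1 * B.indicator 1 p.2 ∂ρ := by
  have hind : (fun p : X × Y => g p.1 * B.indicator 1 p.2) =
      (Prod.snd ⁻¹' B).indicator (g ∘ Prod.fst) := by
    ext p
    by_cases hp : p.2 ∈ B <;> simp [hp]
  rw [hind, integral_indicator (measurable_snd hB), Measure.fst,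
    integral_map measurable_fst.aemeasurable hg]
  rfl

lemma MeasureTheory.SignedMeasure.map_fst_restrict_snd_preimage_apply
    (θ : SignedMeasure (X × Y)) (hB : MeasurableSet B) {A : Set X} (hA : MeasurableSet A) :
    (θ.restrict (Prod.snd ⁻¹' B)).map Prod.fst A = θ (A ×ˢ B) := by
  rw [VectorMeasure.map_apply _ measurable_fst hA,
    VectorMeasure.restrict_apply _ (measurable_snd hB) (measurable_fst hA), ← Set.prod_eq]

lemma MeasureTheory.SignedMeasure.map_fst_restrict_snd_preimage (θ : SignedMeasure (X × Y))
    (hB : MeasurableSet B) :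
    (θ.restrict (Prod.snd ⁻¹' B)).map Prod.fst =
      (θ.toJordanDecomposition.posPart.restrict (Prod.snd ⁻¹' B)).fst.toSignedMeasure -
        (θ.toJordanDecomposition.negPart.restrict (Prod.snd ⁻¹' B)).fst.toSignedMeasure := by
  ext A hA
  rw [θ.map_fst_restrict_snd_preimage_apply hB hA, sub_apply,
    Measure.toSignedMeasure_apply_measurable hA, Measure.toSignedMeasure_apply_measurable hA,
    measureReal_def, measureReal_def,
    Measure.fst_restrict_snd_preimage_apply _ hA, Measure.fst_restrict_snd_preimage_apply _ hA]
  exact θ.apply_eq_posPart_real_sub_negPart_real (hA.prod hB)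

end Marginal

lemma sInt_inner_mul_indicator {X Y F : Type*} [MeasurableSpace X] [MeasurableSpace Y]
    [NormedAddCommGroup F] [InnerProductSpace ℝ F] [CompleteSpace F] {φ : X → F}
    (hφ : ∀ (ρ : Measure X) [IsFiniteMeasure ρ], Integrable φ ρ)
    (θ : SignedMeasure (X × Y)) {B : Set Y} (hB : MeasurableSet B) (f : F) :
    sInt θ (fun p => ⟪φ p.1, f⟫_ℝ * B.indicator 1 p.2) =
      ⟪sInt ((θ.restrict (Prod.snd ⁻¹' B)).map Prod.fst) φ, f⟫_ℝ := by
  have hinner (ρ : Measure (X × Y)) [IsFiniteMeasure ρ] :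
      ⟪∫ x, φ x ∂(ρ.restrict (Prod.snd ⁻¹' B)).fst, f⟫_ℝ =
        ∫ p, ⟪φ p.1, f⟫_ℝ * B.indicator 1 p.2 ∂ρ := by
    rw [← Measure.integral_fst_restrict_snd_preimage ρ hB ((hφ _).1.inner_const),
      real_inner_comm, ← integral_inner (hφ _)]
    simp only [real_inner_comm]
  rw [SignedMeasure.map_fst_restrict_snd_preimage θ hB, sInt_sub_toSignedMeasure hφ,
    inner_sub_left, hinner, hinner, sInt]

theorem stmt6_general {𝒳 𝒴 : Type*} [MeasurableSpace 𝒳]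
    [MeasurableSpace 𝒴] {F : Type*} [NormedAddCommGroup F] [InnerProductSpace ℝ F] [CompleteSpace F]
    (φ : 𝒳 → F)
    (θ : SignedMeasure (𝒳 × 𝒴))
    (hk : Function.Injective (fun μ : SignedMeasure 𝒳 => sInt μ φ))
    (h : ∀ (f : F) (B : Set 𝒴), MeasurableSet B →
      sInt θ (fun p => ⟪φ p.1, f⟫_ℝ * B.indicator (1 : 𝒴 → ℝ) p.2) = 0) :
    ∀ (A : Set 𝒳) (B : Set 𝒴), MeasurableSet A → MeasurableSet B →
      θ (A ×ˢ B) = 0 := by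
  intro A B hA hB
  have hφ (ρ : Measure 𝒳) [IsFiniteMeasure ρ] : Integrable φ ρ :=
    integrable_of_injective_sInt hk ρ
  have hembed : sInt ((θ.restrict (Prod.snd ⁻¹' B)).map Prod.fst) φ = 0 :=
    inner_self_eq_zero.mp <| by rw [← sInt_inner_mul_indicator hφ θ hB, h _ B hB]
  have hmarginal : (θ.restrict (Prod.snd ⁻¹' B)).map Prod.fst = 0 :=
    hk <| hembed.trans (sInt_zero φ).symm
  rw [← θ.map_fst_restrict_snd_preimage_apply hB hA, hmarginal]
  rfl

theorem stmt6 {𝒳 𝒴 : Type*} [MeasurableSpace 𝒳] [TopologicalSpace 𝒳] [PolishSpace 𝒳] [BorelSpace 𝒳]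
    [MeasurableSpace 𝒴] [TopologicalSpace 𝒴] [PolishSpace 𝒴] [BorelSpace 𝒴] {F : Type*} [NormedAddCommGroup F] [InnerProductSpace ℝ F] [CompleteSpace F] [MeasurableSpace F] [BorelSpace F]
    (φ : 𝒳 → F) (hφm : Measurable φ) (Bφ : ℝ) (hφb : ∀ x, ‖φ x‖ ≤ Bφ)
    (θ : SignedMeasure (𝒳 × 𝒴))
    (hk : Function.Injective (fun μ : SignedMeasure 𝒳 => sInt μ φ))
    (h : ∀ (f : F) (B : Set 𝒴), MeasurableSet B →
      sInt θ (fun p => ⟪φ p.1, f⟫_ℝ * B.indicator (1 : 𝒴 → ℝ) p.2) = 0) :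
    ∀ (A : Set 𝒳) (B : Set 𝒴), MeasurableSet A → MeasurableSet B →
      θ (A ×ˢ B) = 0 :=
  stmt6_general φ θ hk h
end

section
/- If k and l are bounded kernels whose mean embeddings of finite signed measures are injective on 𝒳 and 𝒴 respectively, then the map sending a finite signed measure θ on 𝒳 × 𝒴 of the form θ = P_{XY} - P_X ⊗ P_Y (difference of a joint law and the product of its own marginals) to ∫ ψ(y) ⊗ φ(x) dθ is injective in the sense that it vanishes only at θ = 0, even though the product kernel k·l need not have an injective mean embedding on all finite signed measures on 𝒳 × 𝒴. -/
open MeasureTheory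
open scoped InnerProductSpace ENNReal

/-!
Write `θ = μ - η` with `μ, η` the parts of its Jordan decomposition. Applying
`∫ ψ(y) ⊗ φ(x) d(μ - η) = 0` to a vector `f` shows that the signed measure
`B ↦ ∫_{𝒳 × B} ⟪φ x, f⟫ d(μ - η)` on `𝒴` has vanishing `ψ`-embedding, hence is zero. As `f` is
arbitrary, `∫_{𝒳 × B} φ(x) d(μ - η) = 0`, so the injectivity of the `φ`-embedding makes the
signed measure `A ↦ (μ - η) (A ×ˢ B)` vanish. Finite measures agreeing on rectangles are equal.
-/

section RankOne

variable {F G : Type*} [NormedAddCommGroup F] [InnerProductSpace ℝ F]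
  [NormedAddCommGroup G] [InnerProductSpace ℝ G]

theorem rank1_apply (a : G) (b f : F) : rank1 a b f = ⟪b, f⟫_ℝ • a := rfl

theorem norm_rank1 (a : G) (b : F) : ‖rank1 a b‖ = ‖b‖ * ‖a‖ := by
  rw [rank1, ContinuousLinearMap.norm_smulRight_apply, innerSL_apply_norm]

end RankOne

namespace MeasureTheory

section SignedIntegral

variable {X E : Type*} [MeasurableSpace X] [NormedAddCommGroup E] [NormedSpace ℝ E]
  [CompleteSpace E] {g : X → E}

theorem sInt_zero (g : X → E) : sInt (0 : SignedMeasure X) g = 0 := by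
  simp [sInt, SignedMeasure.toJordanDecomposition_zero]

theorem sInt_toSignedMeasure (m : Measure X) [IsFiniteMeasure m] (g : X → E) :
    sInt m.toSignedMeasure g = ∫ x, g x ∂m := by
  rw [← sub_zero m.toSignedMeasure, ← Measure.toSignedMeasure_zero, sInt,
    Measure.toJordanDecomposition_toSignedMeasure_sub]
  simp [Measure.jordanDecompositionOfToSignedMeasureSub_posPart,
    Measure.jordanDecompositionOfToSignedMeasureSub_negPart]

theorem Measure.add_eq_add_of_toSignedMeasure_sub_eq {m n p q : Measure X}
    [IsFiniteMeasure m] [IsFiniteMeasure n] [IsFiniteMeasure p] [IsFiniteMeasure q]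
    (h : m.toSignedMeasure - n.toSignedMeasure = p.toSignedMeasure - q.toSignedMeasure) :
    m + q = p + n := by
  rw [← Measure.toSignedMeasure_eq_toSignedMeasure_iff, Measure.toSignedMeasure_add,
    Measure.toSignedMeasure_add]
  exact sub_eq_sub_iff_add_eq_add.mp h

theorem sInt_toSignedMeasure_sub (m n : Measure X) [IsFiniteMeasure m] [IsFiniteMeasure n]
    (hg : ∀ (ρ : Measure X) [IsFiniteMeasure ρ], Integrable g ρ) :
    sInt (m.toSignedMeasure - n.toSignedMeasure) g = (∫ x, g x ∂m) - ∫ x, g x ∂n := by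
  set j := (m.toSignedMeasure - n.toSignedMeasure).toJordanDecomposition
  have hj : m + j.negPart = j.posPart + n := Measure.add_eq_add_of_toSignedMeasure_sub_eq
    (SignedMeasure.toSignedMeasure_toJordanDecomposition _).symm
  have := congrArg (fun ρ => ∫ x, g x ∂ρ) hj
  simp only [integral_add_measure (hg _) (hg _)] at this
  exact sub_eq_sub_iff_add_eq_add.mpr this.symm

theorem integrable_of_injective_sInt (hinj : Function.Injective fun s : SignedMeasure X => sInt s g)
    (ρ : Measure X) [IsFiniteMeasure ρ] : Integrable g ρ := by
  -- otherwise `sInt ρ g` is the junk value `0 = sInt 0 g`, although `ρ ≠ 0`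
  by_contra hρ
  have hρ0 : ρ.toSignedMeasure = (0 : Measure X).toSignedMeasure := by
    rw [Measure.toSignedMeasure_zero]
    exact hinj (by simp only [sInt_toSignedMeasure, integral_undef hρ, sInt_zero])
  rw [Measure.toSignedMeasure_eq_toSignedMeasure_iff.mp hρ0] at hρ
  exact hρ integrable_zero_measure

theorem Measure.eq_of_injective_sInt_of_integral_eq
    (hinj : Function.Injective fun s : SignedMeasure X => sInt s g)
    {m n : Measure X} [IsFiniteMeasure m] [IsFiniteMeasure n]
    (h : ∫ x, g x ∂m = ∫ x, g x ∂n) : m = n := by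
  have hint := fun (ρ : Measure X) [IsFiniteMeasure ρ] => integrable_of_injective_sInt hinj ρ
  refine Measure.toSignedMeasure_eq_toSignedMeasure_iff.mp (sub_eq_zero.mp (hinj ?_))
  simp only [sInt_toSignedMeasure_sub m n hint, h, sub_self, sInt_zero]

end SignedIntegral

section Density

variable {Z E : Type*} [MeasurableSpace Z] [NormedAddCommGroup E] [NormedSpace ℝ E]
  {m : Measure Z} {c : Z → ℝ}

theorem isFiniteMeasure_withDensity_ofReal_neg (hc : Integrable c m) :
    IsFiniteMeasure (m.withDensity fun z => ENNReal.ofReal (-c z)) :=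
  isFiniteMeasure_withDensity_ofReal hc.neg.hasFiniteIntegral

theorem integral_withDensity_ofReal_sub_neg (hc : Integrable c m) {k : Z → E}
    (hk : ∀ (ρ : Measure Z) [IsFiniteMeasure ρ], Integrable k ρ) :
    (∫ z, k z ∂m.withDensity fun z => ENNReal.ofReal (c z))
      - (∫ z, k z ∂m.withDensity fun z => ENNReal.ofReal (-c z)) = ∫ z, c z • k z ∂m := by
  have := isFiniteMeasure_withDensity_ofReal hc.hasFiniteIntegral
  have := isFiniteMeasure_withDensity_ofReal_neg hc
  have hpos := hc.aemeasurable.ennreal_ofReal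
  have hneg : AEMeasurable (fun z => ENNReal.ofReal (-c z)) m :=
    hc.neg.aemeasurable.ennreal_ofReal
  have htop (f : Z → ℝ) : ∀ᵐ z ∂m, ENNReal.ofReal (f z) < ⊤ := ae_of_all _ fun _ => by simp
  rw [integral_withDensity_eq_integral_toReal_smul₀ hpos (htop _),
    integral_withDensity_eq_integral_toReal_smul₀ hneg (htop _),
    ← integral_sub ((integrable_withDensity_iff_integrable_smul₀' hpos (htop _)).mp (hk _))
      ((integrable_withDensity_iff_integrable_smul₀' hneg (htop _)).mp (hk _))]
  simp only [ENNReal.toReal_ofReal', ← sub_smul, max_zero_sub_eq_self]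

theorem integral_withDensity_add_sub_withDensity_add [CompleteSpace E] {n : Measure Z}
    (hcm : Integrable c m) (hcn : Integrable c n) {k : Z → E}
    (hk : ∀ (ρ : Measure Z) [IsFiniteMeasure ρ], Integrable k ρ) :
    (∫ z, k z ∂(m.withDensity (fun z => ENNReal.ofReal (c z))
        + n.withDensity fun z => ENNReal.ofReal (-c z)))
      - (∫ z, k z ∂(m.withDensity (fun z => ENNReal.ofReal (-c z))
        + n.withDensity fun z => ENNReal.ofReal (c z)))
      = (∫ z, c z • k z ∂m) - ∫ z, c z • k z ∂n := by
  have := isFiniteMeasure_withDensity_ofReal hcm.hasFiniteIntegral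
  have := isFiniteMeasure_withDensity_ofReal hcn.hasFiniteIntegral
  have := isFiniteMeasure_withDensity_ofReal_neg hcm
  have := isFiniteMeasure_withDensity_ofReal_neg hcn
  rw [integral_add_measure (hk _) (hk _), integral_add_measure (hk _) (hk _),
    ← integral_withDensity_ofReal_sub_neg hcm hk, ← integral_withDensity_ofReal_sub_neg hcn hk]
  abel

end Density

section Pushforward

variable {X Z E : Type*} [MeasurableSpace X] [MeasurableSpace Z] [NormedAddCommGroup E]
  [NormedSpace ℝ E] [CompleteSpace E] {g : X → E}

theorem setIntegral_preimage_eq_of_injective_sInt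
    (hinj : Function.Injective fun s : SignedMeasure X => sInt s g)
    {m n : Measure Z} [IsFiniteMeasure m] [IsFiniteMeasure n] {h : Z → X} (hh : Measurable h)
    {c : Z → ℝ} (hcm : Integrable c m) (hcn : Integrable c n)
    (heq : ∫ z, c z • g (h z) ∂m = ∫ z, c z • g (h z) ∂n) {B : Set X} (hB : MeasurableSet B) :
    ∫ z in h ⁻¹' B, c z ∂m = ∫ z in h ⁻¹' B, c z ∂n := by
  have := isFiniteMeasure_withDensity_ofReal hcm.hasFiniteIntegral
  have := isFiniteMeasure_withDensity_ofReal hcn.hasFiniteIntegral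
  have := isFiniteMeasure_withDensity_ofReal_neg hcm
  have := isFiniteMeasure_withDensity_ofReal_neg hcn
  have hg := fun (ρ : Measure X) [IsFiniteMeasure ρ] => integrable_of_injective_sInt hinj ρ
  have hS := hh hB
  have key_g := integral_withDensity_add_sub_withDensity_add hcm hcn (k := fun z => g (h z))
    fun ρ _ => (hg (ρ.map h)).comp_measurable hh
  have key_B := integral_withDensity_add_sub_withDensity_add hcm hcn
    (k := (h ⁻¹' B).indicator (1 : Z → ℝ)) fun ρ _ => (integrable_const 1).indicator hS
  -- `M - N` is the signed measure `c • (m - n)`, written with positive measures only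
  set M := m.withDensity (fun z => ENNReal.ofReal (c z))
    + n.withDensity fun z => ENNReal.ofReal (-c z)
  set N := m.withDensity (fun z => ENNReal.ofReal (-c z))
    + n.withDensity fun z => ENNReal.ofReal (c z)
  rw [heq, sub_self, sub_eq_zero, ← integral_map (μ := M) hh.aemeasurable (hg _).1,
    ← integral_map (μ := N) hh.aemeasurable (hg _).1] at key_g
  have hMN : M.map h = N.map h := Measure.eq_of_injective_sInt_of_integral_eq hinj key_g
  have hind : (fun z => c z • (h ⁻¹' B).indicator (1 : Z → ℝ) z) = (h ⁻¹' B).indicator c := by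
    ext z
    by_cases hz : z ∈ h ⁻¹' B <;> simp [hz]
  rw [integral_indicator_one hS, integral_indicator_one hS, measureReal_def, measureReal_def,
    ← Measure.map_apply hh hB, ← Measure.map_apply hh hB, hMN, sub_self, hind,
    integral_indicator hS, integral_indicator hS] at key_B
  exact sub_eq_zero.mp key_B.symm

end Pushforward

theorem integrable_rank1 {Z F G : Type*} [MeasurableSpace Z] [NormedAddCommGroup F]
    [InnerProductSpace ℝ F] [NormedAddCommGroup G] [InnerProductSpace ℝ G] {m : Measure Z}
    {a : Z → G} {b : Z → F} (ha : Integrable a m) (hb : AEStronglyMeasurable b m) (C : ℝ)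
    (hbC : ∀ z, ‖b z‖ ≤ C) : Integrable (fun z => rank1 (a z) (b z)) m := by
  have hmeas : AEStronglyMeasurable (fun z => rank1 (a z) (b z)) m :=
    isBoundedBilinearMap_smulRight.continuous.comp_aestronglyMeasurable
      (((innerSL ℝ).continuous.comp_aestronglyMeasurable hb).prodMk ha.1)
  refine Integrable.mono' (ha.norm.const_mul C) hmeas (ae_of_all _ fun z => ?_)
  rw [norm_rank1]
  exact mul_le_mul_of_nonneg_right (hbC z) (norm_nonneg _)

section TensorEmbedding

variable {𝒳 𝒴 F G : Type*} [MeasurableSpace 𝒳] [MeasurableSpace 𝒴]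
  [NormedAddCommGroup F] [InnerProductSpace ℝ F] [CompleteSpace F]
  [NormedAddCommGroup G] [InnerProductSpace ℝ G] [CompleteSpace G] {φ : 𝒳 → F} {ψ : 𝒴 → G}
  (hk : Function.Injective fun s : SignedMeasure 𝒳 => sInt s φ)
  (hl : Function.Injective fun s : SignedMeasure 𝒴 => sInt s ψ)
  {Bφ : ℝ} (hφb : ∀ x, ‖φ x‖ ≤ Bφ)
  {μ η : Measure (𝒳 × 𝒴)} [IsFiniteMeasure μ] [IsFiniteMeasure η]

include hk in
theorem integrable_comp_fst_of_injective_sInt (ρ : Measure (𝒳 × 𝒴)) [IsFiniteMeasure ρ] :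
    Integrable (fun p => φ p.1) ρ :=
  (integrable_of_injective_sInt hk (ρ.map Prod.fst)).comp_measurable measurable_fst

include hk hl hφb in
theorem setIntegral_inner_eq_of_integral_rank1_eq
    (hC : ∫ p, rank1 (ψ p.2) (φ p.1) ∂μ = ∫ p, rank1 (ψ p.2) (φ p.1) ∂η) (f : F)
    {B : Set 𝒴} (hB : MeasurableSet B) :
    ∫ p in Prod.snd ⁻¹' B, ⟪φ p.1, f⟫_ℝ ∂μ = ∫ p in Prod.snd ⁻¹' B, ⟪φ p.1, f⟫_ℝ ∂η := by
  have hint (ρ : Measure (𝒳 × 𝒴)) [IsFiniteMeasure ρ] :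
      Integrable (fun p => rank1 (ψ p.2) (φ p.1)) ρ :=
    integrable_rank1 ((integrable_of_injective_sInt hl (ρ.map Prod.snd)).comp_measurable
      measurable_snd) (integrable_comp_fst_of_injective_sInt hk ρ).1 Bφ fun p => hφb p.1
  refine setIntegral_preimage_eq_of_injective_sInt hl measurable_snd
    ((integrable_comp_fst_of_injective_sInt hk μ).inner_const f)
    ((integrable_comp_fst_of_injective_sInt hk η).inner_const f) ?_ hB
  simpa only [ContinuousLinearMap.integral_apply (hint μ),
    ContinuousLinearMap.integral_apply (hint η), rank1_apply] using congrArg (· f) hC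

include hk hl hφb in
theorem map_fst_restrict_eq_of_integral_rank1_eq
    (hC : ∫ p, rank1 (ψ p.2) (φ p.1) ∂μ = ∫ p, rank1 (ψ p.2) (φ p.1) ∂η)
    {B : Set 𝒴} (hB : MeasurableSet B) :
    (μ.restrict (Prod.snd ⁻¹' B)).map Prod.fst = (η.restrict (Prod.snd ⁻¹' B)).map Prod.fst := by
  refine Measure.eq_of_injective_sInt_of_integral_eq hk ?_
  rw [integral_map measurable_fst.aemeasurable (integrable_of_injective_sInt hk _).1,
    integral_map measurable_fst.aemeasurable (integrable_of_injective_sInt hk _).1]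
  refine ext_inner_left ℝ fun f => ?_
  rw [← integral_inner (integrable_comp_fst_of_injective_sInt hk _),
    ← integral_inner (integrable_comp_fst_of_injective_sInt hk _)]
  simp_rw [real_inner_comm _ f]
  exact setIntegral_inner_eq_of_integral_rank1_eq hk hl hφb hC f hB

include hk hl hφb in
theorem Measure.eq_of_integral_rank1_eq
    (hC : ∫ p, rank1 (ψ p.2) (φ p.1) ∂μ = ∫ p, rank1 (ψ p.2) (φ p.1) ∂η) : μ = η :=
  Measure.ext_prod fun {A B} hA hB => by
    have := congrArg (· A) (map_fst_restrict_eq_of_integral_rank1_eq hk hl hφb hC hB)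
    simpa only [Measure.map_apply measurable_fst hA, Measure.restrict_apply (measurable_fst hA),
      Set.prod_eq] using this

end TensorEmbedding

end MeasureTheory

theorem stmt14_general {𝒳 𝒴 : Type*} [MeasurableSpace 𝒳]
    [MeasurableSpace 𝒴] {F G : Type*} [NormedAddCommGroup F] [InnerProductSpace ℝ F] [CompleteSpace F]
    [NormedAddCommGroup G] [InnerProductSpace ℝ G] [CompleteSpace G] (φ : 𝒳 → F) (ψ : 𝒴 → G)
    (Bφ : ℝ) (hφb : ∀ x, ‖φ x‖ ≤ Bφ)
    (hk : Function.Injective (fun μ : SignedMeasure 𝒳 => sInt μ φ)) (hl : Function.Injective (fun ν : SignedMeasure 𝒴 => sInt ν ψ))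
    (θ : SignedMeasure (𝒳 × 𝒴))
    (hC : sInt θ (fun p => rank1 (ψ p.2) (φ p.1)) = 0) :
    θ = 0 := by
  have hμη := Measure.eq_of_integral_rank1_eq hk hl hφb (sub_eq_zero.mp hC)
  rw [← θ.toSignedMeasure_toJordanDecomposition, JordanDecomposition.toSignedMeasure,
    Measure.toSignedMeasure_congr hμη, sub_self]

theorem stmt14 {𝒳 𝒴 : Type*} [MeasurableSpace 𝒳] [TopologicalSpace 𝒳] [PolishSpace 𝒳] [BorelSpace 𝒳]
    [MeasurableSpace 𝒴] [TopologicalSpace 𝒴] [PolishSpace 𝒴] [BorelSpace 𝒴] {F G : Type*} [NormedAddCommGroup F] [InnerProductSpace ℝ F] [CompleteSpace F] [MeasurableSpace F] [BorelSpace F]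
    [NormedAddCommGroup G] [InnerProductSpace ℝ G] [CompleteSpace G] [MeasurableSpace G] [BorelSpace G] (φ : 𝒳 → F) (ψ : 𝒴 → G) (hφm : Measurable φ) (hψm : Measurable ψ)
    (Bφ Bψ : ℝ) (hφb : ∀ x, ‖φ x‖ ≤ Bφ) (hψb : ∀ y, ‖ψ y‖ ≤ Bψ)
    (hk : Function.Injective (fun μ : SignedMeasure 𝒳 => sInt μ φ)) (hl : Function.Injective (fun ν : SignedMeasure 𝒴 => sInt ν ψ))
    (P : Measure (𝒳 × 𝒴)) [IsProbabilityMeasure P]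
    (θ : SignedMeasure (𝒳 × 𝒴))
    (hθ : θ = P.toSignedMeasure
      - ((P.map Prod.fst).prod (P.map Prod.snd)).toSignedMeasure)
    (hC : sInt θ (fun p => rank1 (ψ p.2) (φ p.1)) = 0) :
    θ = 0 :=
  stmt14_general φ ψ Bφ hφb hk hl θ hC
end
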